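/- arXiv:math/0410529 — 5 statements merged into one kernel-verified Lean document; each statement's English description precedes it below -/
import Mathlib

section
/- Let F be a field, let k_1,...,k_n be nonnegative integers, and let A_1,...,A_n be finite subsets of F with |A_i| > k_i for each i. If f ∈ F[x_1,...,x_n] has total degree k_1 + ... + k_n and the coefficient of the monomial x_1^{k_1}···x_n^{k_n} in f is nonzero, then there exist a_1 ∈ A_1, ..., a_n ∈ A_n with f(a_1,...,a_n) ≠ 0. -/
/-- Combinatorial Nullstellensatz (Alon). -/
theorem combinatorial_nullstellensatz {F : Type*} [Field F] {n : ℕ}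
    (k : Fin n → ℕ) (A : Fin n → Finset F) (hA : ∀ i, k i < (A i).card)
    (f : MvPolynomial (Fin n) F)
    (hdeg : f.totalDegree = ∑ i, k i)
    (hcoeff : f.coeff (Finsupp.equivFunOnFinite.symm k) ≠ 0) :
    ∃ a : Fin n → F, (∀ i, a i ∈ A i) ∧ MvPolynomial.eval a f ≠ 0 :=
  MvPolynomial.combinatorial_nullstellensatz_exists_eval_nonzero f _ hcoeff
    (by rw [hdeg, Finsupp.degree_eq_sum]; rfl) A hA
end

section
/- Let P(x_1,...,x_n) = Σ c_{j_1,...,j_n} x_1^{j_1}···x_n^{j_n} be a homogeneous polynomial of degree m over ℂ, and define P*(x_1,...,x_n) = Σ c_{j_1,...,j_n} (x_1)_{j_1}···(x_n)_{j_n}, where (x)_j = x(x-1)···(x-j+1) denotes the falling factorial. Let k_1,...,k_n be nonnegative integers with m ≤ k_1+...+k_n. Then the coefficient of x_1^{k_1}···x_n^{k_n} in P(x_1,...,x_n)(x_1+...+x_n)^{k_1+...+k_n-m} equals ((k_1+...+k_n-m)!/(k_1!···k_n!)) · P*(k_1,...,k_n). -/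
open Finset

/-- For `Q = Σ c_d ∏ x_i^{d i}`, `starEval Q v = Σ c_d ∏ (v i)_{d i}`,
where `(x)_j` is the falling factorial. -/
noncomputable def starEval {n : ℕ} (Q : MvPolynomial (Fin n) ℂ) (v : Fin n → ℂ) : ℂ :=
  ∑ d ∈ Q.support, Q.coeff d * ∏ i, (descPochhammer ℂ (d i)).eval (v i)

lemma prod_X_pow_eq_monomial' {n : ℕ} (f : Fin n → ℕ) :
    (∏ i, MvPolynomial.X i ^ f i : MvPolynomial (Fin n) ℂ)
      = MvPolynomial.monomial (Finsupp.equivFunOnFinite.symm f) 1 := by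
  rw [← MvPolynomial.prod_X_pow_eq_monomial]
  refine (Finset.prod_subset (Finset.subset_univ _) ?_).symm
  intro i _ hi
  simp only [Finsupp.mem_support_iff, not_not] at hi
  simp only [Finsupp.coe_equivFunOnFinite_symm] at hi ⊢
  rw [hi, pow_zero]

lemma coeff_sum_X_pow {n N : ℕ} (e : Fin n →₀ ℕ) :
    ((∑ i, MvPolynomial.X i : MvPolynomial (Fin n) ℂ) ^ N).coeff e
      = if ∑ i, e i = N then (Nat.multinomial Finset.univ e : ℂ) else 0 := by
  classical
  rw [Finset.sum_pow_eq_sum_piAntidiag, MvPolynomial.coeff_sum]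
  have key : ∀ g : Fin n → ℕ,
      ((Nat.multinomial Finset.univ g : MvPolynomial (Fin n) ℂ)
          * ∏ i, MvPolynomial.X i ^ g i).coeff e
        = if g = ⇑e then (Nat.multinomial Finset.univ g : ℂ) else 0 := by
    intro g
    rw [prod_X_pow_eq_monomial', ← MvPolynomial.C_eq_coe_nat, MvPolynomial.coeff_C_mul,
      MvPolynomial.coeff_monomial]
    have : Finsupp.equivFunOnFinite.symm g = e ↔ g = ⇑e := by
      constructor
      · intro h; rw [← h]; rfl
      · intro h; rw [h]; exact Finsupp.equivFunOnFinite.symm_apply_apply e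
    split_ifs with h1 h2 h2 <;> simp_all
  rw [Finset.sum_congr rfl fun g _ => key g, Finset.sum_ite_eq' (piAntidiag univ N) (⇑e)]
  simp [mem_piAntidiag]

lemma nat_key {n : ℕ} (k d : Fin n → ℕ) (hdk : ∀ i, d i ≤ k i) :
    Nat.multinomial Finset.univ (fun i => k i - d i) * ∏ i, (k i).factorial
      = (∑ i, (k i - d i)).factorial * ∏ i, (k i).descFactorial (d i) := by
  have h1 : ∀ i, (k i).factorial = (k i).descFactorial (d i) * (k i - d i).factorial := by
    intro i
    rw [mul_comm, Nat.factorial_mul_descFactorial (hdk i)]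
  calc Nat.multinomial Finset.univ (fun i => k i - d i) * ∏ i, (k i).factorial
      = Nat.multinomial Finset.univ (fun i => k i - d i)
          * ((∏ i, (k i).descFactorial (d i)) * ∏ i, (k i - d i).factorial) := by
        rw [← Finset.prod_mul_distrib]
        congr 1
        exact Finset.prod_congr rfl fun i _ => h1 i
    _ = ((∏ i, (k i - d i).factorial) * Nat.multinomial Finset.univ (fun i => k i - d i))
          * ∏ i, (k i).descFactorial (d i) := by ring
    _ = (∑ i, (k i - d i)).factorial * ∏ i, (k i).descFactorial (d i) := by
        rw [Nat.multinomial_spec]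

/-- Lemma 2.1. -/
theorem coeff_eq_starEval {n m : ℕ} (P : MvPolynomial (Fin n) ℂ)
    (hP : P.IsHomogeneous m) (k : Fin n → ℕ) (hm : m ≤ ∑ i, k i) :
    (P * (∑ i, MvPolynomial.X i) ^ (∑ i, k i - m)).coeff
        (Finsupp.equivFunOnFinite.symm k)
      = (((∑ i, k i - m).factorial : ℂ) / ∏ i, ((k i).factorial : ℂ))
          * starEval P (fun i => (k i : ℂ)) := by
  classical
  set kf := Finsupp.equivFunOnFinite.symm k with hkf
  conv_lhs => rw [P.as_sum, Finset.sum_mul]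
  rw [MvPolynomial.coeff_sum, starEval, Finset.mul_sum]
  refine Finset.sum_congr rfl fun d hd => ?_
  -- degree of d is m
  have hdm : ∑ i, d i = m := by
    have hne : P.coeff d ≠ 0 := MvPolynomial.mem_support_iff.mp hd
    have hdeg : Finsupp.degree d = ∑ i, d i := by
      rw [Finsupp.degree]
      refine Finset.sum_subset (Finset.subset_univ _) ?_
      intro i _ hi
      simpa using hi
    by_contra hne'
    exact hne (hP.coeff_eq_zero (by rw [hdeg]; exact hne'))
  rw [MvPolynomial.coeff_monomial_mul', coeff_sum_X_pow]
  have hdesc : ∏ i, (descPochhammer ℂ (d i)).eval ((k i : ℂ))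
      = ∏ i, ((k i).descFactorial (d i) : ℂ) :=
    Finset.prod_congr rfl fun i _ => descPochhammer_eval_eq_descFactorial ℂ (k i) (d i)
  rw [hdesc]
  by_cases hdk : d ≤ kf
  · have hdk' : ∀ i, d i ≤ k i := fun i => hdk i
    have hfun : ⇑(kf - d) = fun i => k i - d i := by
      funext i; rfl
    have hsum' : ∑ i, (k i - d i) = ∑ i, k i - m := by
      rw [← hdm, ← Finset.sum_tsub_distrib]
      exact fun i _ => hdk' i
    have hsum : ∑ i, (kf - d) i = ∑ i, k i - m := by
      rw [show (fun i => (kf - d) i) = fun i => k i - d i from hfun]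
      exact hsum'
    rw [if_pos hdk, if_pos hsum, hfun]
    have hne0 : (∏ i, ((k i).factorial : ℂ)) ≠ 0 :=
      Finset.prod_ne_zero_iff.mpr fun i _ => Nat.cast_ne_zero.mpr (k i).factorial_ne_zero
    have hnat : Nat.multinomial Finset.univ (fun i => k i - d i) * ∏ i, (k i).factorial
        = (∑ i, k i - m).factorial * ∏ i, (k i).descFactorial (d i) := by
      rw [nat_key k d hdk', hsum']
    have hmulti : (Nat.multinomial Finset.univ (fun i => k i - d i) : ℂ)
        = ((∑ i, k i - m).factorial : ℂ) / (∏ i, ((k i).factorial : ℂ))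
            * ∏ i, ((k i).descFactorial (d i) : ℂ) := by
      rw [div_mul_eq_mul_div, eq_div_iff hne0]
      exact_mod_cast hnat
    rw [hmulti]; ring
  · rw [if_neg hdk]
    obtain ⟨i, hi⟩ : ∃ i, ¬ d i ≤ k i := by
      by_contra h
      push_neg at h
      exact hdk fun i => h i
    have hz : ∏ i, ((k i).descFactorial (d i) : ℂ) = 0 :=
      Finset.prod_eq_zero (Finset.mem_univ i)
        (by rw [Nat.descFactorial_eq_zero_iff_lt.mpr (not_le.mp hi), Nat.cast_zero])
    rw [hz]
    ring
end

section
/- Let m_1,...,m_n be nonnegative integers, let A = (a_{ij}) be an n×n complex matrix, and let P(x_1,...,x_n) ∈ ℂ[x_1,...,x_n] be homogeneous such that swapping any two variables x_i, x_j multiplies P by a fixed sign ν ∈ {1,-1}. Set f(x_1,...,x_n) = det(a_{ij} x_j^{m_i})_{1≤i,j≤n} · P(x_1,...,x_n). Then f*(x,...,x) = P*(x-m_1,...,x-m_n) · ∏_{i=1}^n (x)_{m_i} · D, where D = det(A) if ν = 1 and D = per(A) if ν = -1. -/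
open Finset

/-- The permanent of a square matrix. -/
noncomputable def perm {n : ℕ} (A : Matrix (Fin n) (Fin n) ℂ) : ℂ :=
  ∑ σ : Equiv.Perm (Fin n), ∏ i, A i (σ i)

namespace StarAux

variable {n : ℕ}

lemma starEval_eq_sum_of_subset (Q : MvPolynomial (Fin n) ℂ) (v : Fin n → ℂ)
    (S : Finset (Fin n →₀ ℕ)) (h : Q.support ⊆ S) :
    starEval Q v = ∑ d ∈ S, Q.coeff d * ∏ i, (descPochhammer ℂ (d i)).eval (v i) := by
  refine Finset.sum_subset h ?_
  intro d _ hd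
  rw [MvPolynomial.notMem_support_iff.mp hd, zero_mul]

lemma starEval_zero (v : Fin n → ℂ) : starEval (0 : MvPolynomial (Fin n) ℂ) v = 0 := by
  simp [starEval]

lemma starEval_add (p q : MvPolynomial (Fin n) ℂ) (v : Fin n → ℂ) :
    starEval (p + q) v = starEval p v + starEval q v := by
  rw [starEval_eq_sum_of_subset (p + q) v (p.support ∪ q.support)
      (MvPolynomial.support_add),
    starEval_eq_sum_of_subset p v (p.support ∪ q.support) subset_union_left,
    starEval_eq_sum_of_subset q v (p.support ∪ q.support) subset_union_right,
    ← Finset.sum_add_distrib]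
  refine Finset.sum_congr rfl fun d _ => ?_
  rw [MvPolynomial.coeff_add, add_mul]

lemma starEval_smul (c : ℂ) (p : MvPolynomial (Fin n) ℂ) (v : Fin n → ℂ) :
    starEval (c • p) v = c * starEval p v := by
  rw [starEval_eq_sum_of_subset (c • p) v p.support (Finsupp.support_smul),
    starEval, Finset.mul_sum]
  refine Finset.sum_congr rfl fun d _ => ?_
  rw [MvPolynomial.coeff_smul, smul_eq_mul, mul_assoc]

lemma starEval_C_mul (c : ℂ) (p : MvPolynomial (Fin n) ℂ) (v : Fin n → ℂ) :
    starEval (MvPolynomial.C c * p) v = c * starEval p v := by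
  rw [← MvPolynomial.smul_eq_C_mul, starEval_smul]

lemma starEval_sum {α : Type*} (s : Finset α) (g : α → MvPolynomial (Fin n) ℂ) (v : Fin n → ℂ) :
    starEval (∑ a ∈ s, g a) v = ∑ a ∈ s, starEval (g a) v := by
  induction s using Finset.cons_induction with
  | empty => simp [starEval_zero]
  | cons a s ha ih => rw [Finset.sum_cons, Finset.sum_cons, starEval_add, ih]

lemma starEval_monomial (d : Fin n →₀ ℕ) (c : ℂ) (v : Fin n → ℂ) :
    starEval (MvPolynomial.monomial d c) v
      = c * ∏ i, (descPochhammer ℂ (d i)).eval (v i) := by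
  rcases eq_or_ne c 0 with rfl | hc
  · simp [starEval]
  · rw [starEval, MvPolynomial.support_monomial, if_neg hc, Finset.sum_singleton,
      MvPolynomial.coeff_monomial, if_pos rfl]

end StarAux

namespace StarAux

lemma desc_split (a b : ℕ) (x : ℂ) :
    (descPochhammer ℂ (a + b)).eval x
      = (descPochhammer ℂ a).eval x * (descPochhammer ℂ b).eval (x - a) := by
  rw [← descPochhammer_mul, Polynomial.eval_mul, Polynomial.eval_comp]
  simp

lemma starEval_monomial_mul (e : Fin n →₀ ℕ) (Q : MvPolynomial (Fin n) ℂ) (v : Fin n → ℂ) :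
    starEval (MvPolynomial.monomial e 1 * Q) v
      = (∏ i, (descPochhammer ℂ (e i)).eval (v i))
          * starEval Q (fun i => v i - e i) := by
  induction Q using MvPolynomial.induction_on' with
  | monomial d c =>
    rw [MvPolynomial.monomial_mul, starEval_monomial, starEval_monomial, one_mul]
    have : ∀ i : Fin n, (descPochhammer ℂ ((e + d) i)).eval (v i)
        = (descPochhammer ℂ (e i)).eval (v i) * (descPochhammer ℂ (d i)).eval (v i - e i) := by
      intro i
      rw [Finsupp.add_apply, desc_split]
    rw [Finset.prod_congr rfl (fun i _ => this i), Finset.prod_mul_distrib]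
    ring
  | add p q hp hq =>
    rw [mul_add, starEval_add, hp, hq, starEval_add, mul_add]

lemma starEval_rename (τ : Equiv.Perm (Fin n)) (Q : MvPolynomial (Fin n) ℂ) (v : Fin n → ℂ) :
    starEval (MvPolynomial.rename τ Q) v = starEval Q (fun i => v (τ i)) := by
  induction Q using MvPolynomial.induction_on' with
  | monomial d c =>
    rw [MvPolynomial.rename_monomial, starEval_monomial, starEval_monomial]
    congr 1
    rw [← Equiv.prod_comp τ (fun j => (descPochhammer ℂ ((Finsupp.mapDomain τ d) j)).eval (v j))]
    refine Finset.prod_congr rfl fun i _ => ?_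
    congr 2
    rw [Finsupp.mapDomain_equiv_apply]
    simp
  | add p q hp hq =>
    rw [map_add, starEval_add, hp, hq, starEval_add]

end StarAux

namespace StarAux

lemma rename_swap (P : MvPolynomial (Fin n) ℂ) (ν : ℂ)
    (hswap : ∀ i j : Fin n, i < j → MvPolynomial.rename (Equiv.swap i j) P = ν • P)
    {i j : Fin n} (h : i ≠ j) :
    MvPolynomial.rename (Equiv.swap i j) P = ν • P := by
  rcases lt_or_gt_of_ne h with h' | h'
  · exact hswap i j h'
  · rw [Equiv.swap_comm]; exact hswap j i h'

lemma rename_perm (P : MvPolynomial (Fin n) ℂ) (ν : ℂ) (hν : ν = 1 ∨ ν = -1)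
    (hswap : ∀ i j : Fin n, i < j → MvPolynomial.rename (Equiv.swap i j) P = ν • P)
    (σ : Equiv.Perm (Fin n)) :
    MvPolynomial.rename ⇑σ P = (if Equiv.Perm.sign σ = 1 then (1 : ℂ) else ν) • P := by
  refine Equiv.Perm.swap_induction_on σ (by simp [MvPolynomial.rename_id]) ?_
  intro f x y hxy ih
  have hc : ⇑(Equiv.swap x y * f) = ⇑(Equiv.swap x y) ∘ ⇑f := rfl
  rw [hc, ← MvPolynomial.rename_rename, ih, map_smul,
    rename_swap P ν hswap hxy, Equiv.Perm.sign_mul, Equiv.Perm.sign_swap hxy, smul_smul]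
  rcases hν with rfl | rfl
  · simp
  · rcases Int.units_eq_one_or (Equiv.Perm.sign f) with h | h <;> simp [h]

lemma prod_X_pow (e : Fin n → ℕ) :
    (∏ i, (MvPolynomial.X i : MvPolynomial (Fin n) ℂ) ^ e i)
      = MvPolynomial.monomial (Finsupp.equivFunOnFinite.symm e) 1 := by
  rw [← MvPolynomial.prod_X_pow_eq_monomial]
  rw [← Finset.prod_subset
    (Finset.subset_univ (Finsupp.equivFunOnFinite.symm e).support)
    (fun i _ hi => by
      have h0 : e i = 0 := Finsupp.notMem_support_iff.mp hi
      rw [h0, pow_zero])]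
  exact Finset.prod_congr rfl fun i _ => rfl

lemma perm_eq (A : Matrix (Fin n) (Fin n) ℂ) :
    (∑ σ : Equiv.Perm (Fin n), ∏ i, A (σ i) i)
      = ∑ σ : Equiv.Perm (Fin n), ∏ i, A i (σ i) := by
  rw [← Equiv.sum_comp (Equiv.inv (Equiv.Perm (Fin n))) (fun σ => ∏ i, A i (σ i))]
  refine Finset.sum_congr rfl fun σ _ => ?_
  rw [← Equiv.prod_comp σ (fun i => A i ((Equiv.inv (Equiv.Perm (Fin n)) σ) i))]
  exact Finset.prod_congr rfl fun i _ => by simp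

end StarAux

/-- Theorem 2.1. -/
theorem starEval_det_mul {n d : ℕ} (m : Fin n → ℕ) (A : Matrix (Fin n) (Fin n) ℂ)
    (P : MvPolynomial (Fin n) ℂ) (hP : P.IsHomogeneous d)
    (ν : ℂ) (hν : ν = 1 ∨ ν = -1)
    (hswap : ∀ i j : Fin n, i < j →
      MvPolynomial.rename (Equiv.swap i j) P = ν • P)
    (f : MvPolynomial (Fin n) ℂ)
    (hf : f = Matrix.det (Matrix.of fun i j : Fin n =>
        MvPolynomial.C (A i j) * MvPolynomial.X j ^ m i) * P) :
    ∀ x : ℂ,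
      starEval f (fun _ => x)
        = starEval P (fun i => x - (m i : ℂ))
            * (∏ i, (descPochhammer ℂ (m i)).eval x)
            * (if ν = 1 then A.det else perm A) := by
  intro x
  classical
  set K : ℂ := ∏ i, (descPochhammer ℂ (m i)).eval x with hK
  set S : ℂ := starEval P (fun i => x - (m i : ℂ)) with hS
  have hM : ∀ σ : Equiv.Perm (Fin n),
      (∏ i, (Matrix.of fun i j : Fin n =>
          MvPolynomial.C (A i j) * MvPolynomial.X j ^ m i) (σ i) i)
        = MvPolynomial.C (∏ i, A (σ i) i) *
            MvPolynomial.monomial (Finsupp.equivFunOnFinite.symm fun i => m (σ i)) 1 := by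
    intro σ
    simp only [Matrix.of_apply]
    rw [Finset.prod_mul_distrib, ← map_prod, StarAux.prod_X_pow fun i => m (σ i)]
  have hfd : f = ∑ σ : Equiv.Perm (Fin n),
      MvPolynomial.C (((Equiv.Perm.sign σ : ℤ) : ℂ) * ∏ i, A (σ i) i) *
        (MvPolynomial.monomial (Finsupp.equivFunOnFinite.symm fun i => m (σ i)) 1 * P) := by
    rw [hf, Matrix.det_apply, Finset.sum_mul]
    refine Finset.sum_congr rfl fun σ _ => ?_
    rw [hM σ, Units.smul_def, ← Int.cast_smul_eq_zsmul ℂ, MvPolynomial.smul_eq_C_mul,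
      MvPolynomial.C_mul]
    ring
  have hterm : ∀ σ : Equiv.Perm (Fin n),
      starEval (MvPolynomial.C (((Equiv.Perm.sign σ : ℤ) : ℂ) * ∏ i, A (σ i) i) *
        (MvPolynomial.monomial (Finsupp.equivFunOnFinite.symm fun i => m (σ i)) 1 * P))
        (fun _ => x)
        = (S * K) * ((((Equiv.Perm.sign σ : ℤ) : ℂ)
            * (if Equiv.Perm.sign σ = 1 then (1 : ℂ) else ν)) * ∏ i, A (σ i) i) := by
    intro σ
    rw [StarAux.starEval_C_mul, StarAux.starEval_monomial_mul]
    have h1 : (∏ i, (descPochhammer ℂ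
        ((Finsupp.equivFunOnFinite.symm fun i => m (σ i)) i)).eval ((fun _ => x) i)) = K := by
      rw [hK, ← Equiv.prod_comp σ (fun i => (descPochhammer ℂ (m i)).eval x)]
      exact Finset.prod_congr rfl fun i _ => rfl
    have h2 : starEval P
        (fun i => (fun _ => x) i - ((Finsupp.equivFunOnFinite.symm fun i => m (σ i)) i : ℂ))
        = (if Equiv.Perm.sign σ = 1 then (1 : ℂ) else ν) * S := by
      have h3 : (fun i => (fun _ => x) i
            - ((Finsupp.equivFunOnFinite.symm fun i => m (σ i)) i : ℂ))
          = fun i => (fun j => x - (m j : ℂ)) (σ i) := rfl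
      rw [h3, ← StarAux.starEval_rename σ P (fun j => x - (m j : ℂ)),
        StarAux.rename_perm P ν hν hswap σ, StarAux.starEval_smul, hS]
    rw [h1, h2]
    ring
  rw [hfd, StarAux.starEval_sum, Finset.sum_congr rfl fun σ _ => hterm σ, ← Finset.mul_sum]
  rcases hν with rfl | rfl
  · rw [if_pos rfl]
    congr 1
    rw [Matrix.det_apply' A]
    refine Finset.sum_congr rfl fun σ _ => ?_
    split <;> ring
  · rw [if_neg (by norm_num : (-1 : ℂ) ≠ 1)]
    congr 1
    rw [perm, ← StarAux.perm_eq]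
    refine Finset.sum_congr rfl fun σ _ => ?_
    rcases Int.units_eq_one_or (Equiv.Perm.sign σ) with h | h <;> simp [h]
end

section
/- Let m_1,...,m_n be nonnegative integers and let A = (a_{ij}) be an n×n complex matrix. Then ( det(a_{ij} x_j^{m_i})_{1≤i,j≤n} )* evaluated at (x,...,x) equals det(A) · ∏_{i=1}^n (x)_{m_i}. -/
open Finset

lemma starEval_eq_sum {n : ℕ} (Q : MvPolynomial (Fin n) ℂ) (v : Fin n → ℂ) :
    starEval Q v = (AddMonoidAlgebra.coeff Q).sum fun d c => c * ∏ i, (descPochhammer ℂ (d i)).eval (v i) :=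
  by rw [MvPolynomial.sum_def]; rfl

lemma starEval_monomial {n : ℕ} (d : Fin n →₀ ℕ) (c : ℂ) (v : Fin n → ℂ) :
    starEval (MvPolynomial.monomial d c) v
      = c * ∏ i, (descPochhammer ℂ (d i)).eval (v i) := by
  rw [starEval_eq_sum]
  exact MvPolynomial.sum_monomial_eq (by simp)

lemma starEval_finset_sum {n : ℕ} {ι : Type*} (s : Finset ι)
    (f : ι → MvPolynomial (Fin n) ℂ) (v : Fin n → ℂ) :
    starEval (∑ a ∈ s, f a) v = ∑ a ∈ s, starEval (f a) v := by
  simp only [starEval_eq_sum]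
  rw [Finsupp.sum_finset_sum_index] <;> intros <;> simp [add_mul]

/-- Corollary 2.1(i), case δ = 0. -/
theorem starEval_det_diag {n : ℕ} (m : Fin n → ℕ) (A : Matrix (Fin n) (Fin n) ℂ) :
    ∀ x : ℂ,
      starEval (Matrix.det (Matrix.of fun i j : Fin n =>
          MvPolynomial.C (A i j) * MvPolynomial.X j ^ m i)) (fun _ => x)
        = A.det * ∏ i, (descPochhammer ℂ (m i)).eval x := by
  intro x
  rw [Matrix.det_apply]
  rw [show (∑ σ : Equiv.Perm (Fin n), Equiv.Perm.sign σ •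
      ∏ i, (Matrix.of fun i j : Fin n =>
        MvPolynomial.C (A i j) * MvPolynomial.X j ^ m i) (σ i) i)
    = ∑ σ : Equiv.Perm (Fin n), MvPolynomial.monomial
        (∑ i, Finsupp.single i (m (σ i)))
        ((Equiv.Perm.sign σ : ℂ) * ∏ i, A (σ i) i) from ?_]
  · rw [starEval_finset_sum, Matrix.det_apply, Finset.sum_mul]
    refine Finset.sum_congr rfl fun σ _ => ?_
    rw [starEval_monomial]
    have hd : ∀ j : Fin n, (∑ i, Finsupp.single i (m (σ i)) : Fin n →₀ ℕ) j
        = m (σ j) := by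
      intro j
      rw [Finsupp.finset_sum_apply]
      simp [Finsupp.single_apply, Finset.sum_ite_eq']
    have : (∏ i, (descPochhammer ℂ
        ((∑ i, Finsupp.single i (m (σ i)) : Fin n →₀ ℕ) i)).eval x)
        = ∏ i, (descPochhammer ℂ (m i)).eval x := by
      simp only [hd]
      exact Equiv.prod_comp σ fun i => (descPochhammer ℂ (m i)).eval x
    rw [this]
    rw [smul_mul_assoc, Units.smul_def, zsmul_eq_mul]
    ring
  · refine Finset.sum_congr rfl fun σ _ => ?_
    simp only [Matrix.of_apply, Finset.prod_mul_distrib, ← map_prod]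
    rw [MvPolynomial.monomial_sum_index]
    simp only [← MvPolynomial.X_pow_eq_monomial]
    rw [Units.smul_def, zsmul_eq_mul, map_mul, ← map_intCast (MvPolynomial.C (σ := Fin n) (R := ℂ))]
    ring
end

section
/- Let m_1,...,m_n be nonnegative integers. Then ( det(x_j^{m_i})_{1≤i,j≤n} )* evaluated at (x-n+1, x-n+2, ..., x) equals ∏_{1≤i<j≤n}(m_j - m_i) · ∏_{i=1}^n (x)_{m_i}/(x)_{i-1}, as an identity of rational functions (equivalently, ∏_{i=1}^n (x)_{i-1} times the left side equals ∏_{1≤i<j≤n}(m_j-m_i) · ∏_{i=1}^n (x)_{m_i} as polynomials in x). -/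
open Finset

lemma starEval_add {n : ℕ} (P Q : MvPolynomial (Fin n) ℂ) (v : Fin n → ℂ) :
    starEval (P + Q) v = starEval P v + starEval Q v := by
  classical
  unfold starEval
  set f : (Fin n →₀ ℕ) → ℂ := fun d => ∏ i, (descPochhammer ℂ (d i)).eval (v i) with hf
  set s := P.support ∪ Q.support with hs
  have key : ∀ R : MvPolynomial (Fin n) ℂ, R.support ⊆ s →
      (∑ d ∈ R.support, R.coeff d * f d) = ∑ d ∈ s, R.coeff d * f d := fun R h =>
    Finset.sum_subset h (fun d _ hd => by
      rw [MvPolynomial.notMem_support_iff.mp hd, zero_mul])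
  rw [key _ MvPolynomial.support_add, key P Finset.subset_union_left,
    key Q Finset.subset_union_right, ← Finset.sum_add_distrib]
  exact Finset.sum_congr rfl fun d _ => by rw [MvPolynomial.coeff_add, add_mul]

lemma starEval_zero {n : ℕ} (v : Fin n → ℂ) : starEval 0 v = 0 := by simp [starEval]

noncomputable def starEvalHom {n : ℕ} (v : Fin n → ℂ) : MvPolynomial (Fin n) ℂ →+ ℂ where
  toFun Q := starEval Q v
  map_zero' := starEval_zero v
  map_add' P Q := starEval_add P Q v

lemma starEval_eq_det {n : ℕ} (m : Fin n → ℕ) (v : Fin n → ℂ) :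
    starEval (Matrix.det (Matrix.of fun i j : Fin n =>
        (MvPolynomial.X j : MvPolynomial (Fin n) ℂ) ^ m i)) v
      = Matrix.det (Matrix.of fun i j : Fin n => (descPochhammer ℂ (m i)).eval (v j)) := by
  classical
  rw [Matrix.det_apply']
  have : starEval (∑ σ : Equiv.Perm (Fin n), (Equiv.Perm.sign σ : MvPolynomial (Fin n) ℂ) *
      ∏ i, (Matrix.of fun i j : Fin n => (MvPolynomial.X j : MvPolynomial (Fin n) ℂ) ^ m i) (σ i) i) v
      = ∑ σ : Equiv.Perm (Fin n), starEval ((Equiv.Perm.sign σ : MvPolynomial (Fin n) ℂ) *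
          ∏ i, (Matrix.of fun i j : Fin n => (MvPolynomial.X j : MvPolynomial (Fin n) ℂ) ^ m i) (σ i) i) v :=
    map_sum (starEvalHom v) _ _
  rw [this, Matrix.det_apply']
  refine Finset.sum_congr rfl fun σ _ => ?_
  have hmono : (Equiv.Perm.sign σ : MvPolynomial (Fin n) ℂ) *
      ∏ i, (Matrix.of fun i j : Fin n => (MvPolynomial.X j : MvPolynomial (Fin n) ℂ) ^ m i) (σ i) i
      = MvPolynomial.monomial (Finsupp.equivFunOnFinite.symm fun i => m (σ i))
          ((Equiv.Perm.sign σ : ℤ) : ℂ) := by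
    set d : Fin n →₀ ℕ := Finsupp.equivFunOnFinite.symm fun i => m (σ i) with hd
    have hdi : ∀ i, d i = m (σ i) := fun i => rfl
    have h1 : (∏ i, (Matrix.of fun i j : Fin n => (MvPolynomial.X j : MvPolynomial (Fin n) ℂ) ^ m i) (σ i) i)
        = ∏ i, (MvPolynomial.X i : MvPolynomial (Fin n) ℂ) ^ d i := by
      refine Finset.prod_congr rfl fun i _ => by rw [hdi]; rfl
    have h2 : (∏ i, (MvPolynomial.X i : MvPolynomial (Fin n) ℂ) ^ d i)
        = ∏ i ∈ d.support, (MvPolynomial.X i : MvPolynomial (Fin n) ℂ) ^ d i := by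
      refine (Finset.prod_subset (Finset.subset_univ _) fun x _ hx => ?_).symm
      rw [Finsupp.notMem_support_iff.mp hx, pow_zero]
    rw [h1, h2, MvPolynomial.prod_X_pow_eq_monomial]
    rw [show (Equiv.Perm.sign σ : MvPolynomial (Fin n) ℂ) = MvPolynomial.C ((Equiv.Perm.sign σ : ℤ) : ℂ) by
      rfl]
    rw [MvPolynomial.C_mul_monomial, mul_one]
  rw [hmono, starEval_monomial]
  rfl


lemma prod_Ioi_rev {n : ℕ} (g : Fin n → Fin n → ℂ) :
    (∏ i, ∏ j ∈ Finset.Ioi i, g (Fin.rev j) (Fin.rev i)) = ∏ i, ∏ j ∈ Finset.Ioi i, g i j := by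
  rw [Finset.prod_sigma' univ (fun i => Finset.Ioi i) (fun a b => g (Fin.rev b) (Fin.rev a)),
    Finset.prod_sigma' univ (fun i => Finset.Ioi i) (fun a b => g a b)]
  refine Finset.prod_nbij' (fun x => ⟨Fin.rev x.2, Fin.rev x.1⟩)
    (fun x => ⟨Fin.rev x.2, Fin.rev x.1⟩) ?_ ?_ ?_ ?_ ?_ <;>
    intro a ha <;>
    simp_all [Finset.mem_sigma, Finset.mem_Ioi, Fin.rev_lt_rev]

lemma vand_flip {n : ℕ} (v : Fin n → ℂ) :
    ((Equiv.Perm.sign (Fin.revPerm : Equiv.Perm (Fin n)) : ℤ) : ℂ) * (Matrix.vandermonde v).det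
      = ∏ i, ∏ j ∈ Finset.Ioi i, (v i - v j) := by
  have h1 : Matrix.vandermonde (v ∘ Fin.rev)
      = (Matrix.vandermonde v).submatrix (Fin.revPerm : Equiv.Perm (Fin n)) id := by
    ext i j; rfl
  have h2 := Matrix.det_permute (Fin.revPerm : Equiv.Perm (Fin n)) (Matrix.vandermonde v)
  rw [← h1, Matrix.det_vandermonde] at h2
  have h3 : (∏ i, ∏ j ∈ Finset.Ioi i, ((v ∘ Fin.rev) j - (v ∘ Fin.rev) i))
      = ∏ i, ∏ j ∈ Finset.Ioi i, (v i - v j) := prod_Ioi_rev (fun a b => v a - v b)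
  rw [h3] at h2
  exact h2.symm

lemma desc_eval_mul (a b : ℕ) (y : ℂ) :
    (descPochhammer ℂ a).eval y * (descPochhammer ℂ b).eval (y - (a : ℂ))
      = (descPochhammer ℂ (a + b)).eval y := by
  have h := congrArg (Polynomial.eval y) (descPochhammer_mul (R := ℂ) a b)
  simpa [Polynomial.eval_comp] using h

lemma main_det {n : ℕ} (m : Fin n → ℕ) (y : ℂ) :
    (∏ i : Fin n, (descPochhammer ℂ (i : ℕ)).eval y)
      * (Matrix.of fun i j : Fin n =>
          (descPochhammer ℂ (m i)).eval (y - ((n - 1 - (j : ℕ) : ℕ) : ℂ))).det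
    = (∏ i : Fin n, ∏ j ∈ Finset.Ioi i, ((m j : ℂ) - (m i : ℂ)))
        * ∏ i, (descPochhammer ℂ (m i)).eval y := by
  classical
  have hval : ∀ j : Fin n, ((Fin.rev j : Fin n) : ℕ) = n - 1 - (j : ℕ) := by
    intro j; rw [Fin.val_rev]; omega
  have hre : (∏ i : Fin n, (descPochhammer ℂ (i : ℕ)).eval y)
      = ∏ j : Fin n, (descPochhammer ℂ (n - 1 - (j : ℕ))).eval y := by
    rw [← Equiv.prod_comp (Fin.revPerm : Equiv.Perm (Fin n))
      (fun i : Fin n => (descPochhammer ℂ (i : ℕ)).eval y)]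
    exact Finset.prod_congr rfl fun j _ => by
      rw [show ((Fin.revPerm j : Fin n) : ℕ) = n - 1 - (j : ℕ) from hval j]
  rw [hre, ← Matrix.det_mul_row]
  have hent : (Matrix.of fun i j : Fin n => (descPochhammer ℂ (n - 1 - (j:ℕ))).eval y *
        (Matrix.of fun i j : Fin n =>
          (descPochhammer ℂ (m i)).eval (y - ((n - 1 - (j : ℕ) : ℕ) : ℂ))) i j)
      = Matrix.of fun i j : Fin n => (descPochhammer ℂ (m i)).eval y *
          (descPochhammer ℂ (n - 1 - (j:ℕ))).eval (y - (m i : ℂ)) := by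
    ext i j
    simp only [Matrix.of_apply]
    rw [desc_eval_mul, desc_eval_mul, Nat.add_comm]
  rw [hent, Matrix.det_mul_column (fun i => (descPochhammer ℂ (m i)).eval y)
    (fun i j : Fin n => (descPochhammer ℂ (n - 1 - (j:ℕ))).eval (y - (m i : ℂ)))]
  have hvd : (Matrix.of fun i j : Fin n =>
        (descPochhammer ℂ (j : ℕ)).eval (y - (m i : ℂ))).det
      = (Matrix.vandermonde fun i => y - (m i : ℂ)).det :=
    (Matrix.det_eval_matrixOfPolynomials_eq_det_vandermonde (fun i => y - (m i : ℂ))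
      (fun j => descPochhammer ℂ (j : ℕ))
      (fun j => descPochhammer_natDegree (R := ℂ) (j : ℕ))
      (fun j => monic_descPochhammer ℂ (j : ℕ))).symm
  have h1 : (fun i j : Fin n => (descPochhammer ℂ (n - 1 - (j:ℕ))).eval (y - (m i : ℂ)))
      = (Matrix.of fun i j : Fin n =>
          (descPochhammer ℂ (j : ℕ)).eval (y - (m i : ℂ))).submatrix
            id (Fin.revPerm : Equiv.Perm (Fin n)) := by
    funext i j
    simp only [Matrix.submatrix_apply, Matrix.of_apply, id_eq]
    rw [show ((Fin.revPerm j : Fin n) : ℕ) = n - 1 - (j : ℕ) from hval j]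
  have hflip : ((Equiv.Perm.sign (Fin.revPerm : Equiv.Perm (Fin n)) : ℤ) : ℂ)
      * (Matrix.vandermonde fun i => y - (m i : ℂ)).det
      = ∏ i : Fin n, ∏ j ∈ Finset.Ioi i, ((m j : ℂ) - (m i : ℂ)) := by
    rw [vand_flip]
    exact Finset.prod_congr rfl fun i _ => Finset.prod_congr rfl fun j _ => by ring
  rw [h1, Matrix.det_permute', hvd, ← hflip]
  ring


/-- Corollary 2.1(ii), formula (2.3): here `x_i` is substituted by
`x - n + i` (1-based), i.e. the `i`-th variable (0-based) gets `x - (n-1-i)`. -/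
theorem starEval_det_powers {n : ℕ} (m : Fin n → ℕ) :
    ∀ x : ℂ,
      (∏ i : Fin n, (descPochhammer ℂ (i : ℕ)).eval x)
        * starEval (Matrix.det (Matrix.of fun i j : Fin n =>
              (MvPolynomial.X j : MvPolynomial (Fin n) ℂ) ^ m i))
            (fun i => x - ((n - 1 - (i : ℕ) : ℕ) : ℂ))
      = (∏ i : Fin n, ∏ j ∈ univ.filter (fun j => i < j),
            ((m j : ℂ) - (m i : ℂ)))
          * ∏ i, (descPochhammer ℂ (m i)).eval x := by
  intro x
  rw [starEval_eq_det m (fun i => x - ((n - 1 - (i : ℕ) : ℕ) : ℂ))]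
  have hfil : ∀ i : Fin n, univ.filter (fun j => i < j) = Finset.Ioi i := fun i => by
    ext j; simp
  simp only [hfil]
  exact main_det m x
end
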